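/- arXiv:1501.04839 — 7 statements merged into one kernel-verified Lean document; each statement's English description precedes it below -/
import Mathlib

section
/- Let A be a commutative algebra over a field K of characteristic zero, D = Diff_K(A), and α : D → A an A-linear form. Define ρ_α : D → D by ρ_α(φ) = φ + α(φ). Then ρ_α is a morphism of Lie algebras if and only if δα = (δ1) ∧ α, where δ is the Chevalley–Eilenberg differential on alternating A-valued forms on D associated with the identity representation id : D → D, and 1 denotes the constant 0-form equal to the unit of A. -/
open LinearMap

set_option linter.unusedSectionVars false
set_option linter.unusedVariables false

section Prelim

variable (K A : Type*) [Field K] [CharZero K] [CommRing A] [Algebra K A]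

/-- A differential operator of order at most 1 on `A`. -/
def IsDiff1 (φ : A →ₗ[K] A) : Prop :=
  ∀ a b : A, φ (a * b) = a * φ b + b * φ a - a * b * φ 1

variable {K A}

/-- The commutator bracket of two endomorphisms. -/
def opBracket (φ ψ : A →ₗ[K] A) : A →ₗ[K] A := φ ∘ₗ ψ - ψ ∘ₗ φ

theorem isDiff1_mulLeft (f : A) : IsDiff1 K A (LinearMap.mulLeft K f) := by
  intro a b; simp only [LinearMap.mulLeft_apply, mul_one]; ring

theorem IsDiff1.opBracket {φ ψ : A →ₗ[K] A} (hφ : IsDiff1 K A φ) (hψ : IsDiff1 K A ψ) :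
    IsDiff1 K A (_root_.opBracket φ ψ) := by
  intro a b
  simp only [_root_.opBracket, LinearMap.sub_apply, LinearMap.comp_apply]
  rw [hψ a b, hφ a b]
  simp only [map_add, map_sub]
  rw [hφ a (ψ b), hφ b (ψ a), hφ (a * b) (ψ 1), hψ a (φ b), hψ b (φ a), hψ (a * b) (φ 1),
    hφ a b, hψ a b]
  ring

variable (K A) in
/-- The `A`-module `Diff_K(A)` of differential operators of order at most 1 on `A`. -/
def Diff1 : Submodule A (A →ₗ[K] A) where
  carrier := {φ | IsDiff1 K A φ}
  add_mem' := by
    intro φ ψ hφ hψ a b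
    simp only [LinearMap.add_apply, hφ a b, hψ a b]; ring
  zero_mem' := by intro a b; simp
  smul_mem' := by
    intro c φ hφ a b
    simp only [LinearMap.smul_apply, smul_eq_mul, hφ a b]; ring

/-- The commutator bracket on `Diff1`. -/
def Diff1.bk (φ ψ : Diff1 K A) : Diff1 K A :=
  ⟨opBracket φ.1 ψ.1, IsDiff1.opBracket φ.2 ψ.2⟩

variable (K) in
/-- The multiplication operator by `f`, as a differential operator of order `≤ 1`. -/
def Diff1.const (f : A) : Diff1 K A := ⟨LinearMap.mulLeft K f, isDiff1_mulLeft f⟩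

/-- Evaluation at the unit: the linear form `δ1 : φ ↦ φ(1)` on `Diff1`. -/
def ev1 : Diff1 K A →ₗ[A] A where
  toFun φ := φ.1 1
  map_add' φ ψ := rfl
  map_smul' c φ := rfl

end Prelim

theorem stmt2 {K A : Type*} [Field K] [CharZero K] [CommRing A] [Algebra K A] (α : Diff1 K A →ₗ[A] A) :
    (∀ φ ψ : Diff1 K A,
        opBracket ((φ : A →ₗ[K] A) + LinearMap.mulLeft K (α φ))
            ((ψ : A →ₗ[K] A) + LinearMap.mulLeft K (α ψ)) =
          (Diff1.bk φ ψ : A →ₗ[K] A) + LinearMap.mulLeft K (α (Diff1.bk φ ψ))) ↔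
      (∀ φ ψ : Diff1 K A,
        (φ : A →ₗ[K] A) (α ψ) - (ψ : A →ₗ[K] A) (α φ) - α (Diff1.bk φ ψ) =
          (φ : A →ₗ[K] A) 1 * α ψ - (ψ : A →ₗ[K] A) 1 * α φ) := by
  constructor
  · intro h φ ψ
    have h1 := LinearMap.ext_iff.mp (h φ ψ) 1
    simp only [opBracket, Diff1.bk, LinearMap.sub_apply, LinearMap.coe_comp,
      Function.comp_apply, LinearMap.add_apply, LinearMap.mulLeft_apply, map_add,
      mul_one, Submodule.coe_mk] at h1 ⊢
    linear_combination h1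
  · intro h φ ψ
    have h1 := h φ ψ
    ext x
    have hφ := φ.2 (α ψ) x
    have hψ := ψ.2 (α φ) x
    simp only [opBracket, Diff1.bk, LinearMap.sub_apply, LinearMap.coe_comp,
      Function.comp_apply, LinearMap.add_apply, LinearMap.mulLeft_apply, map_add,
      Submodule.coe_mk] at h1 ⊢
    linear_combination hφ - hψ + x * h1
end

section
/- Let A be a commutative algebra over a field K of characteristic zero, D = Diff_K(A), and α : D → A an A-linear form. For any φ, ψ ∈ D, one has [ρ_α(φ), ρ_α(ψ)] - ρ_α([φ,ψ]) = (δα - (δ1)∧α)(φ,ψ), as elements of D (multiplication operators by the right-hand side element of A). -/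
open LinearMap

set_option linter.unusedSectionVars false
set_option linter.unusedVariables false

theorem stmt3 {K A : Type*} [Field K] [CharZero K] [CommRing A] [Algebra K A] (α : Diff1 K A →ₗ[A] A) (φ ψ : Diff1 K A) :
    opBracket ((φ : A →ₗ[K] A) + LinearMap.mulLeft K (α φ))
        ((ψ : A →ₗ[K] A) + LinearMap.mulLeft K (α ψ)) -
      ((Diff1.bk φ ψ : A →ₗ[K] A) + LinearMap.mulLeft K (α (Diff1.bk φ ψ))) =
      LinearMap.mulLeft K
        ((φ.1 (α ψ) - ψ.1 (α φ) - α (Diff1.bk φ ψ)) -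
          (φ.1 1 * α ψ - ψ.1 1 * α φ)) := by
  ext a
  simp only [opBracket, Diff1.bk, LinearMap.sub_apply, LinearMap.add_apply,
    LinearMap.comp_apply, LinearMap.mulLeft_apply, map_add]
  rw [show φ.1 (α ψ * a) = α ψ * φ.1 a + a * φ.1 (α ψ) - α ψ * a * φ.1 1 from φ.2 _ _,
    show ψ.1 (α φ * a) = α φ * ψ.1 a + a * ψ.1 (α φ) - α φ * a * ψ.1 1 from ψ.2 _ _]
  ring
end

section
/- Let M be a smooth manifold, A = C^∞(M), and D(M) the A-module of differential operators of order ≤ 1 on A. Every Lie-Rinehart algebra structure (D(M), ρ) on D(M) (with the commutator Lie bracket) is of the form ρ = ρ_α for a unique A-linear form α : D(M) → A satisfying δα = (δ1)∧α; specifically α(φ) = (ρ(φ) - φ)(1). -/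
open LinearMap

set_option linter.unusedSectionVars false
set_option linter.unusedVariables false

namespace Diff1

variable {K A : Type*} [Field K] [CharZero K] [CommRing A] [Algebra K A]

@[simp]
theorem bk_apply (φ ψ : Diff1 K A) (a : A) : (bk φ ψ).1 a = φ.1 (ψ.1 a) - ψ.1 (φ.1 a) := rfl

@[simp]
theorem const_apply (f a : A) : (Diff1.const K f).1 a = f * a := rfl

/-- Test the Leibniz rule against `ψ = 1` at the unit. -/
theorem anchor_apply_of_leibniz {ρ : Diff1 K A → Diff1 K A}
    (hLeibniz : ∀ (φ ψ : Diff1 K A) (a : A),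
      bk φ (a • ψ) = ((ρ φ).1 a - a * (ρ φ).1 1) • ψ + a • bk φ ψ)
    (φ : Diff1 K A) (a : A) : (ρ φ).1 a = φ.1 a + ((ρ φ).1 1 - φ.1 1) * a := by
  have h := congrArg (fun t : Diff1 K A => t.1 1) (hLeibniz φ (Diff1.const K 1) a)
  simp only [bk_apply, const_apply, Submodule.coe_smul, Submodule.coe_add, LinearMap.add_apply,
    LinearMap.smul_apply, smul_eq_mul, one_mul, mul_one] at h
  linear_combination -h

def anchorForm (ρ : Diff1 K A →ₗ[A] Diff1 K A) : Diff1 K A →ₗ[A] A := ev1 ∘ₗ ρ - ev1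

theorem anchorForm_apply (ρ : Diff1 K A →ₗ[A] Diff1 K A) (φ : Diff1 K A) :
    anchorForm ρ φ = (ρ φ).1 1 - φ.1 1 := rfl

/-- Evaluate `ρ [φ, ψ] = [ρ φ, ρ ψ]` at the unit. -/
theorem cocycle_of_map_bk {ρ : Diff1 K A → Diff1 K A} {α : Diff1 K A → A}
    (hρ : ∀ φ a, (ρ φ).1 a = φ.1 a + α φ * a)
    (hLie : ∀ φ ψ : Diff1 K A, ρ (bk φ ψ) = bk (ρ φ) (ρ ψ)) (φ ψ : Diff1 K A) :
    φ.1 (α ψ) - ψ.1 (α φ) - α (bk φ ψ) = φ.1 1 * α ψ - ψ.1 1 * α φ := by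
  have h := congrArg (fun t : Diff1 K A => t.1 1) (hLie φ ψ)
  simp only [bk_apply, hρ, map_add, mul_one] at h
  linear_combination -h

end Diff1

section Mfd

open scoped Manifold

local notation "∞" => (⊤ : ℕ∞)

variable {EM : Type*} [NormedAddCommGroup EM] [NormedSpace ℝ EM]
  {HM : Type*} [TopologicalSpace HM] {I : ModelWithCorners ℝ EM HM}
  {M : Type*} [TopologicalSpace M] [ChartedSpace HM M] [IsManifold I ∞ M]

theorem stmt4 (ρ : Diff1 ℝ C^∞⟮I, M; ℝ⟯ →ₗ[C^∞⟮I, M; ℝ⟯] Diff1 ℝ C^∞⟮I, M; ℝ⟯)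
    (hLie : ∀ φ ψ : Diff1 ℝ C^∞⟮I, M; ℝ⟯, ρ (Diff1.bk φ ψ) = Diff1.bk (ρ φ) (ρ ψ))
    (hLeibniz : ∀ (φ ψ : Diff1 ℝ C^∞⟮I, M; ℝ⟯) (a : C^∞⟮I, M; ℝ⟯),
      Diff1.bk φ (a • ψ) = ((ρ φ).1 a - a * (ρ φ).1 1) • ψ + a • Diff1.bk φ ψ) :
    ∃! α : Diff1 ℝ C^∞⟮I, M; ℝ⟯ →ₗ[C^∞⟮I, M; ℝ⟯] C^∞⟮I, M; ℝ⟯,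
      (∀ φ ψ : Diff1 ℝ C^∞⟮I, M; ℝ⟯,
        φ.1 (α ψ) - ψ.1 (α φ) - α (Diff1.bk φ ψ) = φ.1 1 * α ψ - ψ.1 1 * α φ) ∧
      (∀ φ : Diff1 ℝ C^∞⟮I, M; ℝ⟯, ((ρ φ : C^∞⟮I, M; ℝ⟯ →ₗ[ℝ] C^∞⟮I, M; ℝ⟯)) = (φ : C^∞⟮I, M; ℝ⟯ →ₗ[ℝ] C^∞⟮I, M; ℝ⟯) + LinearMap.mulLeft ℝ (α φ)) ∧
      (∀ φ : Diff1 ℝ C^∞⟮I, M; ℝ⟯, α φ = (ρ φ).1 1 - φ.1 1) := by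
  have hρ := Diff1.anchor_apply_of_leibniz hLeibniz
  refine ⟨Diff1.anchorForm ρ, ⟨Diff1.cocycle_of_map_bk hρ hLie, fun φ => LinearMap.ext (hρ φ),
    fun _ => rfl⟩, ?_⟩
  rintro α ⟨-, -, hα⟩
  exact LinearMap.ext fun φ => (hα φ).trans (Diff1.anchorForm_apply ρ φ).symm

end Mfd
end

section
/- Let ω : D(M) × D(M) → C^∞(M) be a nondegenerate alternating C^∞(M)-bilinear form on the module of differential operators of order ≤ 1 on a smooth manifold M (nondegenerate meaning φ ↦ i_φω is a module isomorphism onto the dual). Then there exists a unique H ∈ D(M) with i_H ω = -δ1, this H is a vector field (i.e. H(1) = 0), and (i_1 ω)(H) = 1. -/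
open LinearMap

set_option linter.unusedSectionVars false
set_option linter.unusedVariables false

namespace LinearMap.IsAlt

variable {R M N : Type*} [CommSemiring R] [AddCommMonoid M] [Module R M] [AddCommGroup N]
  [Module R N] {ω : M →ₗ[R] M →ₗ[R] N} {α : M →ₗ[R] N} {H : M}

theorem apply_eq_zero_of_eq (hω : ω.IsAlt) (hH : ω H = α) : α H = 0 :=
  hH ▸ hω H

theorem apply_right_eq_neg_of_eq (hω : ω.IsAlt) (hH : ω H = α) (x : M) : ω x H = -α x := by
  rw [← hω.neg, hH]

end LinearMap.IsAlt

section Ev1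

variable {K A : Type*} [Field K] [CharZero K] [CommRing A] [Algebra K A]

theorem ev1_const (f : A) : ev1 (Diff1.const K f) = f :=
  mul_one f

end Ev1

section Mfd

open scoped Manifold

local notation "∞" => (⊤ : ℕ∞)

variable {EM : Type*} [NormedAddCommGroup EM] [NormedSpace ℝ EM]
  {HM : Type*} [TopologicalSpace HM] {I : ModelWithCorners ℝ EM HM}
  {M : Type*} [TopologicalSpace M] [ChartedSpace HM M] [IsManifold I (⊤ : ℕ∞) M]

theorem stmt7 (ω : Diff1 ℝ C^∞⟮I, M; ℝ⟯ →ₗ[C^∞⟮I, M; ℝ⟯] Diff1 ℝ C^∞⟮I, M; ℝ⟯ →ₗ[C^∞⟮I, M; ℝ⟯] C^∞⟮I, M; ℝ⟯)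
    (halt : ∀ φ : Diff1 ℝ C^∞⟮I, M; ℝ⟯, ω φ φ = 0) (hbij : Function.Bijective ω) :
    (∃! Hv : Diff1 ℝ C^∞⟮I, M; ℝ⟯, ω Hv = -ev1) ∧
      ∀ Hv : Diff1 ℝ C^∞⟮I, M; ℝ⟯, ω Hv = -ev1 → Hv.1 1 = 0 ∧ ω (Diff1.const ℝ (1 : C^∞⟮I, M; ℝ⟯)) Hv = 1 := by
  have hω : ω.IsAlt := halt
  refine ⟨hbij.existsUnique _, fun Hv hHv => ⟨?_, ?_⟩⟩
  · exact neg_eq_zero.mp (hω.apply_eq_zero_of_eq hHv)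
  · rw [hω.apply_right_eq_neg_of_eq hHv, LinearMap.neg_apply, neg_neg, ev1_const]
end Mfd
end

section
/- Let ω be a nondegenerate alternating C^∞(M)-bilinear form on D(M) and H the unique vector field with i_H ω = -δ1. Then the map X ↦ i_Xω is an isomorphism of C^∞(M)-modules from 𝔛(M) onto D(M)*_H = {η ∈ D(M)* : η(H) = 0}. -/
open LinearMap

set_option linter.unusedSectionVars false
set_option linter.unusedVariables false

theorem LinearMap.IsAlt.apply_eq_of_eq_neg {R M N : Type*} [CommRing R] [AddCommGroup M]
    [Module R M] [AddCommGroup N] [Module R N] {ω : M →ₗ[R] M →ₗ[R] N} (hω : ω.IsAlt)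
    {h : M} {δ : M →ₗ[R] N} (hh : ω h = -δ) (x : M) : ω x h = δ x := by
  rw [← hω.neg, hh, neg_apply, neg_neg]

section Mfd

open scoped Manifold

local notation "∞" => (⊤ : ℕ∞)

variable {EM : Type*} [NormedAddCommGroup EM] [NormedSpace ℝ EM]
  {HM : Type*} [TopologicalSpace HM] {I : ModelWithCorners ℝ EM HM}
  {M : Type*} [TopologicalSpace M] [ChartedSpace HM M] [IsManifold I ((⊤ : ℕ∞) : WithTop ℕ∞) M]

theorem stmt9 (ω : Diff1 ℝ C^∞⟮I, M; ℝ⟯ →ₗ[C^∞⟮I, M; ℝ⟯] Diff1 ℝ C^∞⟮I, M; ℝ⟯ →ₗ[C^∞⟮I, M; ℝ⟯] C^∞⟮I, M; ℝ⟯)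
    (halt : ∀ φ : Diff1 ℝ C^∞⟮I, M; ℝ⟯, ω φ φ = 0) (hbij : Function.Bijective ω)
    (Hv : Diff1 ℝ C^∞⟮I, M; ℝ⟯) (hH : ω Hv = -ev1) :
    (∀ X : Diff1 ℝ C^∞⟮I, M; ℝ⟯, X.1 1 = 0 → ω X Hv = 0) ∧
      (∀ X Y : Diff1 ℝ C^∞⟮I, M; ℝ⟯, X.1 1 = 0 → Y.1 1 = 0 → ω X = ω Y → X = Y) ∧
      ∀ η : Diff1 ℝ C^∞⟮I, M; ℝ⟯ →ₗ[C^∞⟮I, M; ℝ⟯] C^∞⟮I, M; ℝ⟯, η Hv = 0 → ∃ X : Diff1 ℝ C^∞⟮I, M; ℝ⟯, X.1 1 = 0 ∧ ω X = η := by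
  have hω : ω.IsAlt := halt
  have hδ : ∀ X, ω X Hv = X.1 1 := fun X => hω.apply_eq_of_eq_neg hH X
  refine ⟨fun X hX => (hδ X).trans hX, fun X Y _ _ hXY => hbij.injective hXY, fun η hη => ?_⟩
  obtain ⟨X, rfl⟩ := hbij.surjective η
  exact ⟨X, (hδ X).symm.trans hη, rfl⟩
end Mfd
end

section
/- Let (D(M), ρ_α, ω) be a symplectic Lie-Rinehart-Jacobi algebra structure on D(M), i.e. α : D(M) → C^∞(M) is C^∞(M)-linear with δα = (δ1)∧α, and ω is a nondegenerate alternating bilinear form with δω = -α∧ω. Then (1 + α(1))·ω = δ_α(i_1ω), where δ_α η = δη + α∧η. -/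
open LinearMap

set_option linter.unusedSectionVars false
set_option linter.unusedVariables false

/-! Evaluate `δω = -α ∧ ω` at `(1, φ, ψ)`. The unit `1` acts as the identity on `A` and is central
for the bracket, so its Lie derivative is the identity and Cartan's formula reads
`δ(i₁ω) + i₁(δω) = ω`; on the other side `i₁(α ∧ ω) = α(1) ω - α ∧ i₁ω`. -/

namespace Diff1

variable {K A : Type*} [Field K] [CharZero K] [CommRing A] [Algebra K A]

theorem const_one_apply (f : A) : (const K (1 : A)).1 f = f := by
  simp [const]

theorem bk_const_one_left (φ : Diff1 K A) : bk (const K 1) φ = 0 := by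
  ext f
  simp [bk, opBracket, const]

-- `d₁`, `d₂` are the differential `δ` of the identity representation on 1- and 2-cochains.
def d₁ (η : Diff1 K A → A) (φ ψ : Diff1 K A) : A :=
  φ.1 (η ψ) - ψ.1 (η φ) - η (bk φ ψ)

def d₂ (ω : LinearMap.BilinForm A (Diff1 K A)) (φ ψ χ : Diff1 K A) : A :=
  φ.1 (ω ψ χ) - ψ.1 (ω φ χ) + χ.1 (ω φ ψ) - ω (bk φ ψ) χ + ω (bk φ χ) ψ - ω (bk ψ χ) φ

def wedge₁₁ (α η : Diff1 K A → A) (φ ψ : Diff1 K A) : A :=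
  α φ * η ψ - α ψ * η φ

def wedge₁₂ (α : Diff1 K A → A) (ω : LinearMap.BilinForm A (Diff1 K A)) (φ ψ χ : Diff1 K A) : A :=
  α φ * ω ψ χ - α ψ * ω φ χ + α χ * ω φ ψ

def interiorOne (ω : LinearMap.BilinForm A (Diff1 K A)) : Diff1 K A → A :=
  ω (const K 1)

theorem d₁_interiorOne_add_d₂_const_one {ω : LinearMap.BilinForm A (Diff1 K A)}
    (hω : LinearMap.IsAlt ω) (φ ψ : Diff1 K A) :
    d₁ (interiorOne ω) φ ψ + d₂ ω (const K 1) φ ψ = ω φ ψ := by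
  simp only [d₁, d₂, interiorOne, const_one_apply, bk_const_one_left,
    ← LinearMap.IsAlt.neg hω (const K 1), map_zero, LinearMap.zero_apply]
  ring

theorem wedge₁₂_const_one (α : Diff1 K A → A) (ω : LinearMap.BilinForm A (Diff1 K A))
    (φ ψ : Diff1 K A) :
    wedge₁₂ α ω (const K 1) φ ψ = α (const K 1) * ω φ ψ - wedge₁₁ α (interiorOne ω) φ ψ := by
  simp only [wedge₁₂, wedge₁₁, interiorOne]
  ring

theorem one_add_mul_eq_d₁_interiorOne_add_wedge₁₁ {α : Diff1 K A → A}
    {ω : LinearMap.BilinForm A (Diff1 K A)} (hω : LinearMap.IsAlt ω) {φ ψ : Diff1 K A}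
    (hδω : d₂ ω (const K 1) φ ψ = -wedge₁₂ α ω (const K 1) φ ψ) :
    (1 + α (const K 1)) * ω φ ψ =
      d₁ (interiorOne ω) φ ψ + wedge₁₁ α (interiorOne ω) φ ψ := by
  have cartan := d₁_interiorOne_add_d₂_const_one hω φ ψ
  rw [hδω, wedge₁₂_const_one] at cartan
  linear_combination -cartan

end Diff1

section Mfd

open scoped Manifold

local notation "∞" => (⊤ : ℕ∞)

variable {EM : Type*} [NormedAddCommGroup EM] [NormedSpace ℝ EM]
  {HM : Type*} [TopologicalSpace HM] {I : ModelWithCorners ℝ EM HM}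
  {M : Type*} [TopologicalSpace M] [ChartedSpace HM M] [IsManifold I (⊤ : ℕ∞) M]

theorem stmt12_general (α : Diff1 ℝ C^∞⟮I, M; ℝ⟯ →ₗ[C^∞⟮I, M; ℝ⟯] C^∞⟮I, M; ℝ⟯)
    (ω : Diff1 ℝ C^∞⟮I, M; ℝ⟯ →ₗ[C^∞⟮I, M; ℝ⟯] Diff1 ℝ C^∞⟮I, M; ℝ⟯ →ₗ[C^∞⟮I, M; ℝ⟯] C^∞⟮I, M; ℝ⟯)
    (halt : ∀ φ : Diff1 ℝ C^∞⟮I, M; ℝ⟯, ω φ φ = 0)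
    (hδω : ∀ φ ψ χ : Diff1 ℝ C^∞⟮I, M; ℝ⟯,
      ((φ).1 (ω ψ χ) - (ψ).1 (ω φ χ) + (χ).1 (ω φ ψ) - (ω (Diff1.bk φ ψ) χ) + (ω (Diff1.bk φ χ) ψ) - (ω (Diff1.bk ψ χ) φ)) =
        -(α φ * ω ψ χ - α ψ * ω φ χ + α χ * ω φ ψ)) :
    ∀ φ ψ : Diff1 ℝ C^∞⟮I, M; ℝ⟯,
      (1 + α (Diff1.const ℝ (1 : C^∞⟮I, M; ℝ⟯))) * ω φ ψ =
        (φ.1 (ω (Diff1.const ℝ (1 : C^∞⟮I, M; ℝ⟯)) ψ) - ψ.1 (ω (Diff1.const ℝ (1 : C^∞⟮I, M; ℝ⟯)) φ) - ω (Diff1.const ℝ (1 : C^∞⟮I, M; ℝ⟯)) (Diff1.bk φ ψ)) +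
          (α φ * ω (Diff1.const ℝ (1 : C^∞⟮I, M; ℝ⟯)) ψ - α ψ * ω (Diff1.const ℝ (1 : C^∞⟮I, M; ℝ⟯)) φ) := fun φ ψ =>
  Diff1.one_add_mul_eq_d₁_interiorOne_add_wedge₁₁ halt (hδω _ φ ψ)

theorem stmt12 (α : Diff1 ℝ C^∞⟮I, M; ℝ⟯ →ₗ[C^∞⟮I, M; ℝ⟯] C^∞⟮I, M; ℝ⟯)
    (hα : ∀ φ ψ : Diff1 ℝ C^∞⟮I, M; ℝ⟯,
      φ.1 (α ψ) - ψ.1 (α φ) - α (Diff1.bk φ ψ) = φ.1 1 * α ψ - ψ.1 1 * α φ)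
    (ω : Diff1 ℝ C^∞⟮I, M; ℝ⟯ →ₗ[C^∞⟮I, M; ℝ⟯] Diff1 ℝ C^∞⟮I, M; ℝ⟯ →ₗ[C^∞⟮I, M; ℝ⟯] C^∞⟮I, M; ℝ⟯)
    (halt : ∀ φ : Diff1 ℝ C^∞⟮I, M; ℝ⟯, ω φ φ = 0) (hbij : Function.Bijective ω)
    (hδω : ∀ φ ψ χ : Diff1 ℝ C^∞⟮I, M; ℝ⟯,
      ((φ).1 (ω ψ χ) - (ψ).1 (ω φ χ) + (χ).1 (ω φ ψ) - (ω (Diff1.bk φ ψ) χ) + (ω (Diff1.bk φ χ) ψ) - (ω (Diff1.bk ψ χ) φ)) =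
        -(α φ * ω ψ χ - α ψ * ω φ χ + α χ * ω φ ψ)) :
    ∀ φ ψ : Diff1 ℝ C^∞⟮I, M; ℝ⟯,
      (1 + α (Diff1.const ℝ (1 : C^∞⟮I, M; ℝ⟯))) * ω φ ψ =
        (φ.1 (ω (Diff1.const ℝ (1 : C^∞⟮I, M; ℝ⟯)) ψ) - ψ.1 (ω (Diff1.const ℝ (1 : C^∞⟮I, M; ℝ⟯)) φ) - ω (Diff1.const ℝ (1 : C^∞⟮I, M; ℝ⟯)) (Diff1.bk φ ψ)) +
          (α φ * ω (Diff1.const ℝ (1 : C^∞⟮I, M; ℝ⟯)) ψ - α ψ * ω (Diff1.const ℝ (1 : C^∞⟮I, M; ℝ⟯)) φ) :=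
  stmt12_general α ω halt hδω
end Mfd
end

section
/- Let M be a contact manifold with contact form β, 2-form Ω whose restriction to Ker(β)×Ker(β) is nondegenerate, and Reeb field E (β(E)=1, i_EΩ=0). Then the alternating bilinear form Ω̃ = Ω̄ + (δ1)∧β̃ on D(M) is nondegenerate: the map φ ↦ i_φΩ̃ is an isomorphism of C^∞(M)-modules from D(M) onto its dual D(M)*. Explicitly, the inverse sends a linear form ν to φ = ν(E) + X - ν(1)·E, where X ∈ Ker(β) is the unique element with i_XΩ = ν|_{Ker(β)}. -/
/-!
Let `u` be multiplication by `1` and `δ = ev1`. Every `ψ` splits as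
`(ψ - δ ψ • u - β ψ • E) + δ ψ • u + β ψ • E`, the first summand lying in `K = ker δ ∩ ker β`.
Since `Ω` kills `u` and `E`, `Ω̃ = Ω + δ ∧ β` restricts to `Ω` on `K`, while `Ω̃ φ E = δ φ` and
`Ω̃ φ u = -β φ`. Hence `Ω̃ φ = 0` forces `δ φ = β φ = 0` and then `φ = 0` by nondegeneracy of `Ω`
on `K`; and the displayed inverse is checked summand by summand.
-/

open LinearMap

set_option linter.unusedSectionVars false
set_option linter.unusedVariables false

section Diff1Lemmas

variable {K A : Type*} [Field K] [CharZero K] [CommRing A] [Algebra K A]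

theorem Diff1.const_eq_smul (f : A) : Diff1.const K f = f • Diff1.const K 1 := by
  ext a
  simp [Diff1.const]

end Diff1Lemmas

section ExtendedForm

variable {R D : Type*} [CommRing R]

section AddCommMonoid

variable [AddCommMonoid D] [Module R D] {Ω : D →ₗ[R] D →ₗ[R] R} {δ β : D →ₗ[R] R} {u E : D}

/-- The form `Ω̃ = Ω̄ + δ ∧ β̃`. -/
def extendedForm (Ω : D →ₗ[R] D →ₗ[R] R) (δ β : D →ₗ[R] R) (φ ψ : D) : R :=
  Ω φ ψ + (δ φ * β ψ - δ ψ * β φ)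

theorem LinearMap.IsAlt.apply_eq_zero_of_eq_zero (hΩ : Ω.IsAlt) {x : D} (hx : Ω x = 0) (y : D) :
    Ω y x = 0 :=
  hΩ.isRefl x y (by rw [hx, LinearMap.zero_apply])

theorem eq_zero_of_extendedForm_eq_zero (hΩ : Ω.IsAlt) (hu : Ω u = 0) (hE : Ω E = 0)
    (hδu : δ u = 1) (hβu : β u = 0) (hδE : δ E = 0) (hβE : β E = 1)
    (hK : ∀ X, δ X = 0 → β X = 0 → (∀ Y, δ Y = 0 → β Y = 0 → Ω X Y = 0) → X = 0)
    {φ : D} (hφ : ∀ ψ, extendedForm Ω δ β φ ψ = 0) : φ = 0 := by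
  have hδφ : δ φ = 0 := by
    simpa [extendedForm, hΩ.apply_eq_zero_of_eq_zero hE, hδE, hβE] using hφ E
  have hβφ : β φ = 0 := by
    simpa [extendedForm, hΩ.apply_eq_zero_of_eq_zero hu, hδu, hβu, hδφ] using hφ u
  refine hK φ hδφ hβφ fun Y _ _ => ?_
  simpa [extendedForm, hδφ, hβφ] using hφ Y

end AddCommMonoid

variable [AddCommGroup D] [Module R D] {Ω : D →ₗ[R] D →ₗ[R] R} {δ β : D →ₗ[R] R} {u E : D}

theorem extendedForm_smul_add_sub_smul (hΩ : Ω.IsAlt) (hu : Ω u = 0) (hE : Ω E = 0)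
    (hδu : δ u = 1) (hβu : β u = 0) (hδE : δ E = 0) (hβE : β E = 1)
    (ν : D →ₗ[R] R) {X : D} (hδX : δ X = 0) (hβX : β X = 0)
    (hX : ∀ Y, δ Y = 0 → β Y = 0 → Ω X Y = ν Y) (ψ : D) :
    extendedForm Ω δ β (ν E • u + X - ν u • E) ψ = ν ψ := by
  set Y := ψ - δ ψ • u - β ψ • E
  have hψ : ψ = Y + δ ψ • u + β ψ • E := by simp only [Y]; abel
  have hΩψ : Ω X ψ = ν Y := by
    rw [hψ, map_add, map_add, map_smul, map_smul, hΩ.apply_eq_zero_of_eq_zero hu,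
      hΩ.apply_eq_zero_of_eq_zero hE, smul_zero, smul_zero, add_zero, add_zero]
    exact hX Y (by simp [Y, hδu, hδE]) (by simp [Y, hβu, hβE])
  have hνψ : ν ψ = ν Y + δ ψ * ν u + β ψ * ν E := by
    conv_lhs => rw [hψ]
    simp only [map_add, map_smul, smul_eq_mul]
  have hΩφ : Ω (ν E • u + X - ν u • E) = Ω X := by simp [hu, hE]
  simp only [extendedForm, hΩφ, hΩψ, map_add, map_sub, map_smul, hδu, hβu, hδE, hβE, hδX, hβX,
    smul_eq_mul]
  linear_combination -hνψ

end ExtendedForm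

section Mfd

open scoped Manifold

local notation "∞" => (⊤ : ℕ∞)

variable {EM : Type*} [NormedAddCommGroup EM] [NormedSpace ℝ EM]
  {HM : Type*} [TopologicalSpace HM] {I : ModelWithCorners ℝ EM HM}
  {M : Type*} [TopologicalSpace M] [ChartedSpace HM M] [IsManifold I ∞ M]

theorem stmt15 (βt : Diff1 ℝ C^∞⟮I, M; ℝ⟯ →ₗ[C^∞⟮I, M; ℝ⟯] C^∞⟮I, M; ℝ⟯) (hβc : ∀ f : C^∞⟮I, M; ℝ⟯, βt (Diff1.const ℝ f) = 0)
    (E : Diff1 ℝ C^∞⟮I, M; ℝ⟯) (hE1 : E.1 1 = 0) (hβE : βt E = 1)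
    (Ωb : Diff1 ℝ C^∞⟮I, M; ℝ⟯ →ₗ[C^∞⟮I, M; ℝ⟯] Diff1 ℝ C^∞⟮I, M; ℝ⟯ →ₗ[C^∞⟮I, M; ℝ⟯] C^∞⟮I, M; ℝ⟯)
    (hΩalt : ∀ φ : Diff1 ℝ C^∞⟮I, M; ℝ⟯, Ωb φ φ = 0)
    (hΩc : ∀ (f : C^∞⟮I, M; ℝ⟯) (ψ : Diff1 ℝ C^∞⟮I, M; ℝ⟯), Ωb (Diff1.const ℝ f) ψ = 0)
    (hΩE : ∀ ψ : Diff1 ℝ C^∞⟮I, M; ℝ⟯, Ωb E ψ = 0)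
    (hnd : ∀ ν : Diff1 ℝ C^∞⟮I, M; ℝ⟯ →ₗ[C^∞⟮I, M; ℝ⟯] C^∞⟮I, M; ℝ⟯, ∃! X : Diff1 ℝ C^∞⟮I, M; ℝ⟯,
      (X.1 1 = 0 ∧ βt X = 0) ∧ ∀ Y : Diff1 ℝ C^∞⟮I, M; ℝ⟯, Y.1 1 = 0 → βt Y = 0 → Ωb X Y = ν Y) :
    (∀ φ : Diff1 ℝ C^∞⟮I, M; ℝ⟯, (∀ ψ : Diff1 ℝ C^∞⟮I, M; ℝ⟯, (Ωb φ ψ + ((φ).1 1 * βt ψ - (ψ).1 1 * βt φ)) = 0) → φ = 0) ∧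
      ∀ ν : Diff1 ℝ C^∞⟮I, M; ℝ⟯ →ₗ[C^∞⟮I, M; ℝ⟯] C^∞⟮I, M; ℝ⟯, ∀ X : Diff1 ℝ C^∞⟮I, M; ℝ⟯, X.1 1 = 0 → βt X = 0 →
        (∀ Y : Diff1 ℝ C^∞⟮I, M; ℝ⟯, Y.1 1 = 0 → βt Y = 0 → Ωb X Y = ν Y) →
        ∀ ψ : Diff1 ℝ C^∞⟮I, M; ℝ⟯, (Ωb (Diff1.const ℝ (ν E) + X - ν (Diff1.const ℝ (1 : C^∞⟮I, M; ℝ⟯)) • E) ψ + (((Diff1.const ℝ (ν E) + X - ν (Diff1.const ℝ (1 : C^∞⟮I, M; ℝ⟯)) • E)).1 1 * βt ψ - (ψ).1 1 * βt (Diff1.const ℝ (ν E) + X - ν (Diff1.const ℝ (1 : C^∞⟮I, M; ℝ⟯)) • E))) = ν ψ := by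
  have hΩ1 : Ωb (Diff1.const ℝ 1) = 0 := LinearMap.ext (hΩc 1)
  have hΩE' : Ωb E = 0 := LinearMap.ext hΩE
  have hΩ : Ωb.IsAlt := hΩalt
  have hδ1 : ev1 (Diff1.const ℝ (1 : C^∞⟮I, M; ℝ⟯)) = 1 := ev1_const 1
  have hK : ∀ X : Diff1 ℝ C^∞⟮I, M; ℝ⟯, ev1 X = 0 → βt X = 0 →
      (∀ Y : Diff1 ℝ C^∞⟮I, M; ℝ⟯, ev1 Y = 0 → βt Y = 0 → Ωb X Y = 0) → X = 0 :=
    fun X hX1 hXβ hXΩ => (hnd 0).unique ⟨⟨hX1, hXβ⟩, hXΩ⟩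
      ⟨⟨map_zero (ev1 (K := ℝ)), map_zero βt⟩, fun Y _ _ => by simp⟩
  constructor
  · intro φ hφ
    exact eq_zero_of_extendedForm_eq_zero hΩ hΩ1 hΩE' hδ1 (hβc 1) hE1 hβE hK hφ
  · intro ν X hX1 hXβ hXΩ ψ
    rw [Diff1.const_eq_smul (ν E)]
    exact (extendedForm_smul_add_sub_smul hΩ hΩ1 hΩE' hδ1 (hβc 1) hE1 hβE ν hX1 hXβ hXΩ ψ :)
end Mfd
end
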